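/- arXiv:2504.21076 — 5 statements merged into one kernel-verified Lean document; each statement's English description precedes it below -/
import Mathlib

section
/- Let d₁, d₂ be positive integers and let A₁,…,Aₘ be Hermitian d₁×d₁ matrices with {Aᵢ,Aⱼ} = 2δᵢⱼ·I, and B₁,…,Bₘ Hermitian d₂×d₂ matrices with {Bᵢ,Bⱼ} = 2δᵢⱼ·I. Then for any density matrices ρ (on ℂ^{d₁}) and σ (on ℂ^{d₂}), ∑ᵢ |Tr(Aᵢρ)·Tr(Bᵢσ)| ≤ 1. -/
/-!
Write `αᵢ = Tr(Aᵢ ρ)`, which is real since `Aᵢ` and `ρ` are Hermitian. The anticommutation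
relations make `C = ∑ αᵢ Aᵢ` square to `(∑ αᵢ²) • 1`, and `Tr(C ρ) = ∑ αᵢ²`, so nonnegativity of
the variance `Tr((C - Tr(C ρ))² ρ)` reads `(∑ αᵢ²)² ≤ ∑ αᵢ²`, i.e. `∑ αᵢ² ≤ 1`. The same holds for
`βᵢ = Tr(Bᵢ σ)`, and `∑ |αᵢ| |βᵢ| ≤ (∑ αᵢ² + ∑ βᵢ²) / 2 ≤ 1`.
-/

open ComplexOrder

open Matrix

lemma Matrix.IsHermitian.im_trace_mul {n : Type*} [Fintype n] {A ρ : Matrix n n ℂ}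
    (hA : A.IsHermitian) (hρ : ρ.IsHermitian) : (A * ρ).trace.im = 0 := by
  rw [← Complex.conj_eq_iff_im, starRingEnd_apply, ← trace_conjTranspose, conjTranspose_mul,
    hA.eq, hρ.eq, trace_mul_comm]

lemma Matrix.PosSemidef.re_trace_conjTranspose_mul_self_mul_nonneg {n : Type*} [Fintype n]
    {ρ : Matrix n n ℂ} (hρ : ρ.PosSemidef) (X : Matrix n n ℂ) : 0 ≤ (Xᴴ * X * ρ).trace.re := by
  rw [Matrix.mul_assoc, trace_mul_comm]
  exact (Complex.nonneg_iff.mp (hρ.mul_mul_conjTranspose_same X).trace_nonneg).1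

lemma Matrix.IsHermitian.sq_re_trace_mul_le {n : Type*} [Fintype n] [DecidableEq n]
    {C ρ : Matrix n n ℂ} (hC : C.IsHermitian) (hρ : ρ.PosSemidef) (hρ1 : ρ.trace = 1) :
    (C * ρ).trace.re ^ 2 ≤ (C * C * ρ).trace.re := by
  set a := (C * ρ).trace.re
  have hX : (C - (a : ℂ) • 1)ᴴ = C - (a : ℂ) • 1 := by
    simp [conjTranspose_sub, hC.eq]
  have hexp : (C - (a : ℂ) • 1) * (C - (a : ℂ) • 1) * ρ
      = C * C * ρ - ((2 * a : ℝ) : ℂ) • (C * ρ) + ((a ^ 2 : ℝ) : ℂ) • ρ := by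
    simp only [sub_mul, mul_sub, Matrix.smul_mul, Matrix.mul_smul, Matrix.one_mul,
      Matrix.mul_one, smul_smul]
    push_cast
    module
  have hvar := hρ.re_trace_conjTranspose_mul_self_mul_nonneg (C - (a : ℂ) • 1)
  rw [hX, hexp, trace_add, trace_sub, trace_smul, trace_smul, hρ1] at hvar
  simp only [Complex.add_re, Complex.sub_re, smul_eq_mul, Complex.re_ofReal_mul,
    Complex.ofReal_re, mul_one] at hvar
  nlinarith

theorem sum_smul_mul_self_of_anticomm {ι R : Type*} [Fintype ι] [DecidableEq ι] [Ring R]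
    [Algebra ℂ R] (A : ι → R)
    (hA : ∀ i j, A i * A j + A j * A i = if i = j then (2 : ℂ) • (1 : R) else 0) (s : ι → ℂ) :
    (∑ i, s i • A i) * (∑ i, s i • A i) = (∑ i, s i ^ 2) • (1 : R) := by
  have hexp : (∑ i, s i • A i) * (∑ i, s i • A i) = ∑ i, ∑ j, (s i * s j) • (A i * A j) := by
    rw [Finset.sum_mul_sum]
    simp only [smul_mul_smul_comm]
  refine smul_right_injective R (two_ne_zero : (2 : ℂ) ≠ 0) ?_
  calc (2 : ℂ) • ((∑ i, s i • A i) * (∑ i, s i • A i))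
      = ∑ i, ∑ j, (s i * s j) • (A i * A j) + ∑ i, ∑ j, (s i * s j) • (A j * A i) := by
        rw [two_smul, hexp, Finset.sum_comm (f := fun i j => (s i * s j) • (A i * A j))]
        simp only [mul_comm (s _) (s _)]
    _ = ∑ i, ∑ j, (s i * s j) • (A i * A j + A j * A i) := by
        simp only [smul_add, Finset.sum_add_distrib]
    _ = (2 : ℂ) • ((∑ i, s i ^ 2) • (1 : R)) := by
        simp only [hA, smul_ite, smul_zero, Finset.sum_ite_eq, Finset.mem_univ, if_true,
          smul_smul, sq, Finset.sum_smul]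
        rw [Finset.smul_sum]
        simp only [smul_smul, mul_comm (2 : ℂ)]

theorem sum_sq_re_trace_mul_le_one {ι n : Type*} [Fintype ι] [DecidableEq ι] [Fintype n]
    [DecidableEq n] (A : ι → Matrix n n ℂ) (hA : ∀ i, (A i).IsHermitian)
    (hAanti : ∀ i j, A i * A j + A j * A i = if i = j then (2 : ℂ) • (1 : Matrix n n ℂ) else 0)
    {ρ : Matrix n n ℂ} (hρ : ρ.PosSemidef) (hρ1 : ρ.trace = 1) :
    ∑ i, (A i * ρ).trace.re ^ 2 ≤ 1 := by
  set α : ι → ℝ := fun i => (A i * ρ).trace.re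
  set C : Matrix n n ℂ := ∑ i, (α i : ℂ) • A i
  have hC : C.IsHermitian := by
    simp [C, IsHermitian, conjTranspose_sum, (hA _).eq]
  have hCρ : (C * ρ).trace.re = ∑ i, α i ^ 2 := by
    simp [C, Finset.sum_mul, trace_sum, sq, α]
  have hCCρ : (C * C * ρ).trace.re = ∑ i, α i ^ 2 := by
    rw [sum_smul_mul_self_of_anticomm A hAanti, Matrix.smul_mul, Matrix.one_mul, trace_smul, hρ1]
    simp [← Complex.ofReal_pow]
  have hvar := hC.sq_re_trace_mul_le hρ hρ1
  rw [hCρ, hCCρ] at hvar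
  nlinarith

theorem stmt0_general {d₁ d₂ m : ℕ}
    (A : Fin m → Matrix (Fin d₁) (Fin d₁) ℂ)
    (B : Fin m → Matrix (Fin d₂) (Fin d₂) ℂ)
    (hA : ∀ i, (A i).IsHermitian) (hB : ∀ i, (B i).IsHermitian)
    (hAanti : ∀ i j, A i * A j + A j * A i =
      if i = j then (2 : ℂ) • (1 : Matrix (Fin d₁) (Fin d₁) ℂ) else 0)
    (hBanti : ∀ i j, B i * B j + B j * B i =
      if i = j then (2 : ℂ) • (1 : Matrix (Fin d₂) (Fin d₂) ℂ) else 0)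
    (ρ : Matrix (Fin d₁) (Fin d₁) ℂ) (σ : Matrix (Fin d₂) (Fin d₂) ℂ)
    (hρ : ρ.PosSemidef) (hρ1 : ρ.trace = 1)
    (hσ : σ.PosSemidef) (hσ1 : σ.trace = 1) :
    ∑ i, ‖(A i * ρ).trace‖ * ‖(B i * σ).trace‖ ≤ 1 := by
  have hα := sum_sq_re_trace_mul_le_one A hA hAanti hρ hρ1
  have hβ := sum_sq_re_trace_mul_le_one B hB hBanti hσ hσ1
  calc ∑ i, ‖(A i * ρ).trace‖ * ‖(B i * σ).trace‖
      = ∑ i, |(A i * ρ).trace.re| * |(B i * σ).trace.re| := by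
        simp only [Complex.abs_re_eq_norm.mpr ((hA _).im_trace_mul hρ.1),
          Complex.abs_re_eq_norm.mpr ((hB _).im_trace_mul hσ.1)]
    _ ≤ ∑ i, ((A i * ρ).trace.re ^ 2 + (B i * σ).trace.re ^ 2) / 2 :=
        Finset.sum_le_sum fun i _ => by
          nlinarith [two_mul_le_add_sq |(A i * ρ).trace.re| |(B i * σ).trace.re|, sq_abs
            (A i * ρ).trace.re, sq_abs (B i * σ).trace.re]
    _ ≤ 1 := by
        rw [← Finset.sum_div, Finset.sum_add_distrib]
        linarith

/-- **Proposition 2 (anticommuting product bound).** If `A₁,…,Aₘ` are Hermitian `d₁ × d₁`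
matrices with `{Aᵢ, Aⱼ} = 2δᵢⱼ 1`, and `B₁,…,Bₘ` Hermitian `d₂ × d₂` matrices with
`{Bᵢ, Bⱼ} = 2δᵢⱼ 1`, then for any density matrices `ρ`, `σ` we have
`∑ᵢ |Tr(Aᵢ ρ)| · |Tr(Bᵢ σ)| ≤ 1`. -/
theorem stmt0 {d₁ d₂ m : ℕ} (hd₁ : 0 < d₁) (hd₂ : 0 < d₂)
    (A : Fin m → Matrix (Fin d₁) (Fin d₁) ℂ)
    (B : Fin m → Matrix (Fin d₂) (Fin d₂) ℂ)
    (hA : ∀ i, (A i).IsHermitian) (hB : ∀ i, (B i).IsHermitian)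
    (hAanti : ∀ i j, A i * A j + A j * A i =
      if i = j then (2 : ℂ) • (1 : Matrix (Fin d₁) (Fin d₁) ℂ) else 0)
    (hBanti : ∀ i j, B i * B j + B j * B i =
      if i = j then (2 : ℂ) • (1 : Matrix (Fin d₂) (Fin d₂) ℂ) else 0)
    (ρ : Matrix (Fin d₁) (Fin d₁) ℂ) (σ : Matrix (Fin d₂) (Fin d₂) ℂ)
    (hρ : ρ.PosSemidef) (hρ1 : ρ.trace = 1)
    (hσ : σ.PosSemidef) (hσ1 : σ.trace = 1) :
    ∑ i, ‖(A i * ρ).trace‖ * ‖(B i * σ).trace‖ ≤ 1 :=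
  stmt0_general A B hA hB hAanti hBanti ρ σ hρ hρ1 hσ hσ1
end

section
/- Let A₁,…,Aₘ be Hermitian d×d matrices satisfying AᵢAⱼ + AⱼAᵢ = 2δᵢⱼ·I for all i,j (i.e., they square to the identity and pairwise anticommute). Then for any density matrix ρ on ℂ^d, ∑ᵢ (Tr(Aᵢρ))² ≤ 1. -/
/-!
With `tᵢ = Tr(Aᵢρ)` put `B = ∑ tᵢ Aᵢ` and `s = ∑ tᵢ²`. The anticommutation relations give
`B² = s`, so `Tr(Bρ) = s` and `Tr(B²ρ) = s`; nonnegativity of the variance of `B` in the state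
`ρ` then reads `s² ≤ s`, i.e. `s ≤ 1`.
-/

open ComplexOrder
open Matrix

theorem mul_self_sum_smul_of_anticomm {K R ι : Type*} [Field K] [NeZero (2 : K)] [Ring R]
    [Algebra K R] [Fintype ι] [DecidableEq ι] (A : ι → R)
    (hA : ∀ i j, A i * A j + A j * A i = if i = j then (2 : K) • (1 : R) else 0) (c : ι → K) :
    (∑ i, c i • A i) * (∑ i, c i • A i) = (∑ i, c i ^ 2) • (1 : R) := by
  set B := ∑ i, c i • A i
  have hBB : B * B = ∑ i, ∑ j, (c i * c j) • (A i * A j) := by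
    simp only [B, Finset.sum_mul_sum, smul_mul_smul_comm]
  have hBB' : B * B = ∑ i, ∑ j, (c i * c j) • (A j * A i) := by
    rw [hBB, Finset.sum_comm]
    exact Finset.sum_congr rfl fun i _ => Finset.sum_congr rfl fun j _ => by rw [mul_comm (c j)]
  refine smul_right_injective R (two_ne_zero (α := K)) ?_
  calc (2 : K) • (B * B) = ∑ i, ∑ j, (c i * c j) • (A i * A j + A j * A i) := by
        simp only [smul_add, Finset.sum_add_distrib, ← hBB, ← hBB', two_smul]
    _ = (2 : K) • (∑ i, c i ^ 2) • (1 : R) := by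
        simp only [hA, smul_ite, smul_zero, Finset.sum_ite_eq, Finset.mem_univ, if_true,
          smul_smul, ← Finset.sum_smul, sq, mul_comm (2 : K), Finset.sum_mul]

theorem re_trace_mul_sq_le {𝕜 n : Type*} [RCLike 𝕜] [Fintype n] [DecidableEq n]
    {B ρ : Matrix n n 𝕜} (hB : B.IsHermitian) (hρ : ρ.PosSemidef) (hρ1 : ρ.trace = 1) :
    RCLike.re (B * ρ).trace ^ 2 ≤ RCLike.re (B * B * ρ).trace := by
  set μ := RCLike.re (B * ρ).trace
  set M := B - (μ : 𝕜) • (1 : Matrix n n 𝕜)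
  have hM : Mᴴ = M := (hB.sub (isHermitian_one.smul (RCLike.conj_ofReal μ))).eq
  have hnonneg : 0 ≤ RCLike.re (M * M * ρ).trace := by
    have := (hρ.mul_mul_conjTranspose_same M).trace_nonneg
    rw [trace_mul_comm, ← mul_assoc, hM] at this
    exact (RCLike.nonneg_iff.mp this).1
  have hexpand : RCLike.re (M * M * ρ).trace = RCLike.re (B * B * ρ).trace - μ ^ 2 := by
    simp only [M, sub_mul, mul_sub, Matrix.smul_mul, Matrix.mul_smul, one_mul, mul_one, trace_sub,
      trace_smul, hρ1, smul_eq_mul, map_sub, RCLike.re_ofReal_mul, RCLike.ofReal_re]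
    ring
  linarith

/-- **Anticommutativity bound, special case.** If `A₁,…,Aₘ` are Hermitian `d × d` matrices with
`AᵢAⱼ + AⱼAᵢ = 2δᵢⱼ 1` (they square to the identity and pairwise anticommute), then for any
density matrix `ρ` on `ℂ^d`, `∑ᵢ (Tr(Aᵢ ρ))² ≤ 1`. -/
theorem stmt1 {d m : ℕ} (A : Fin m → Matrix (Fin d) (Fin d) ℂ)
    (hA : ∀ i, (A i).IsHermitian)
    (hAanti : ∀ i j, A i * A j + A j * A i =
      if i = j then (2 : ℂ) • (1 : Matrix (Fin d) (Fin d) ℂ) else 0)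
    (ρ : Matrix (Fin d) (Fin d) ℂ) (hρ : ρ.PosSemidef) (hρ1 : ρ.trace = 1) :
    ∑ i, (((A i * ρ).trace).re) ^ 2 ≤ 1 := by
  set t : Fin m → ℝ := fun i => ((A i * ρ).trace).re
  set s := ∑ i, t i ^ 2
  set B := ∑ i, (t i : ℂ) • A i
  have hB : B.IsHermitian :=
    isSelfAdjoint_sum _ fun i _ => (hA i).smul (Complex.conj_ofReal (t i))
  have hBρ : ((B * ρ).trace).re = s := by
    simp [B, Finset.sum_mul, trace_sum, t, s, sq]
  have hBBρ : ((B * B * ρ).trace).re = s := by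
    rw [mul_self_sum_smul_of_anticomm A hAanti]
    simp [hρ1, s, ← Complex.ofReal_pow]
  have hs : 0 ≤ s := Finset.sum_nonneg fun i _ => sq_nonneg (t i)
  have hvar := re_trace_mul_sq_le hB hρ hρ1
  simp only [RCLike.re_to_complex, hBρ, hBBρ] at hvar
  nlinarith
end

section
/- Let E₁,…,E_N be Hermitian d×d matrices and ρ a density matrix such that (1/2)·sqrt(∑_{i≠j} (Tr({Eᵢ,Eⱼ}ρ))²) ≤ K. Then ∑ᵢ (Tr(Eᵢρ))² ≤ maxᵢ Tr(Eᵢ²ρ) + K. -/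
/-!
Put `aᵢ = Tr(Eᵢ ρ)`, `S = ∑ aᵢ²` and `A = ∑ aᵢ Eᵢ`, so that `Tr(A ρ) = S`. Since the variance of
the Hermitian `A` in the state `ρ` is nonnegative, `S² ≤ Tr(A² ρ)`. Expanding
`A² = ∑ᵢ aᵢ² Eᵢ² + ½ ∑_{i ≠ j} aᵢ aⱼ {Eᵢ, Eⱼ}`, the diagonal part is at most `S · maxᵢ Tr(Eᵢ² ρ)`
and, by Cauchy–Schwarz with `∑_{i ≠ j} aᵢ² aⱼ² ≤ S²`, the off-diagonal part is at most `S · K`.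
Dividing `S² ≤ S (maxᵢ Tr(Eᵢ² ρ) + K)` by `S` gives the claim.
-/

open ComplexOrder Finset Matrix

lemma Finset.sum_offDiag_mul_mul_le {ι : Type*} [DecidableEq ι] (s : Finset ι) (a : ι → ℝ)
    (c : ι × ι → ℝ) :
    ∑ p ∈ s.offDiag, a p.1 * a p.2 * c p ≤ (∑ i ∈ s, a i ^ 2) * √(∑ p ∈ s.offDiag, c p ^ 2) := by
  have hsq : ∑ p ∈ s.offDiag, (a p.1 * a p.2) ^ 2 ≤ (∑ i ∈ s, a i ^ 2) ^ 2 :=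
    calc ∑ p ∈ s.offDiag, (a p.1 * a p.2) ^ 2 ≤ ∑ p ∈ s ×ˢ s, (a p.1 * a p.2) ^ 2 :=
          sum_le_sum_of_subset_of_nonneg (product_sdiff_diag s ▸ sdiff_subset)
            fun _ _ _ => sq_nonneg _
      _ = (∑ i ∈ s, a i ^ 2) ^ 2 := by
          rw [sq (∑ i ∈ s, _), sum_mul_sum, sum_product]
          simp only [mul_pow]
  calc ∑ p ∈ s.offDiag, a p.1 * a p.2 * c p
      ≤ √(∑ p ∈ s.offDiag, (a p.1 * a p.2) ^ 2) * √(∑ p ∈ s.offDiag, c p ^ 2) :=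
        Real.sum_mul_le_sqrt_mul_sqrt _ _ _
    _ ≤ (∑ i ∈ s, a i ^ 2) * √(∑ p ∈ s.offDiag, c p ^ 2) := by
        gcongr
        exact (Real.sqrt_le_left (sum_nonneg fun _ _ => sq_nonneg _)).mpr hsq

lemma Finset.sum_sum_mul_mul_eq_diag_add_offDiag {ι : Type*} [DecidableEq ι] (s : Finset ι)
    (a : ι → ℝ) (t : ι → ι → ℝ) :
    ∑ i ∈ s, ∑ j ∈ s, a i * a j * t i j
      = ∑ i ∈ s, a i ^ 2 * t i i
        + 1 / 2 * ∑ p ∈ s.offDiag, a p.1 * a p.2 * (t p.1 p.2 + t p.2 p.1) := by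
  have hsymm : ∑ i ∈ s, ∑ j ∈ s, a i * a j * t i j
      = 1 / 2 * ∑ p ∈ s ×ˢ s, a p.1 * a p.2 * (t p.1 p.2 + t p.2 p.1) := by
    rw [sum_product]
    simp only [mul_add, sum_add_distrib]
    rw [sum_comm (f := fun i j => a i * a j * t j i)]
    simp only [mul_comm (a _) (a _)]
    ring
  rw [hsymm, ← diag_union_offDiag, sum_union (disjoint_diag_offDiag _), sum_diag, mul_add,
    mul_sum]
  congr 1
  exact sum_congr rfl fun i _ => by ring

namespace Matrix

variable {n : Type*} [Fintype n]

lemma IsHermitian.re_trace_mul_self_mul_nonneg {B ρ : Matrix n n ℂ} (hB : B.IsHermitian)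
    (hρ : ρ.PosSemidef) : 0 ≤ (B * B * ρ).trace.re := by
  have hcyc : (B * B * ρ).trace = (B * ρ * Bᴴ).trace := by
    rw [hB.eq, mul_assoc, trace_mul_comm, mul_assoc]
  rw [hcyc]
  exact (Complex.nonneg_iff.mp (hρ.mul_mul_conjTranspose_same B).trace_nonneg).1

lemma IsHermitian.sq_re_trace_mul_le_s2 [DecidableEq n] {A ρ : Matrix n n ℂ} (hA : A.IsHermitian)
    (hρ : ρ.PosSemidef) (hρ1 : ρ.trace = 1) :
    (A * ρ).trace.re ^ 2 ≤ (A * A * ρ).trace.re := by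
  set c : ℝ := (A * ρ).trace.re
  -- `Tr((A - c)² ρ) ≥ 0` for the mean `c = Tr(A ρ)`
  have hB : (A - (c : ℂ) • 1).IsHermitian := hA.sub (isHermitian_one.smul (Complex.conj_ofReal c))
  have hvar := hB.re_trace_mul_self_mul_nonneg hρ
  have hexp : (A - (c : ℂ) • 1) * (A - (c : ℂ) • 1) * ρ
      = A * A * ρ - (c : ℂ) • (A * ρ) - (c : ℂ) • (A * ρ) + ((c : ℂ) * c) • ρ := by
    simp only [sub_mul, mul_sub, Matrix.smul_mul, Matrix.mul_smul, one_mul, mul_one, smul_smul]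
    abel
  rw [hexp, trace_add, trace_sub, trace_sub, trace_smul, trace_smul, hρ1] at hvar
  simp only [Complex.add_re, Complex.sub_re, smul_eq_mul, Complex.mul_re, mul_one,
    Complex.ofReal_re, Complex.ofReal_im] at hvar
  nlinarith

lemma re_trace_sum_smul_mul_sum_smul_mul {ι : Type*} [Fintype ι] (a : ι → ℝ)
    (E : ι → Matrix n n ℂ) (ρ : Matrix n n ℂ) :
    ((∑ i, (a i : ℂ) • E i) * (∑ i, (a i : ℂ) • E i) * ρ).trace.re
      = ∑ i, ∑ j, a i * a j * (E i * E j * ρ).trace.re := by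
  rw [sum_mul_sum]
  simp only [sum_mul, trace_sum, Complex.re_sum, Matrix.smul_mul, Matrix.mul_smul, smul_smul,
    trace_smul, smul_eq_mul, ← Complex.ofReal_mul, Complex.re_ofReal_mul]
  exact sum_congr rfl fun i _ => sum_congr rfl fun j _ => by ring

lemma re_trace_sum_smul_mul_sum_smul_mul_le {ι : Type*} [Fintype ι] [DecidableEq ι] (a : ι → ℝ)
    (E : ι → Matrix n n ℂ) (ρ : Matrix n n ℂ) {M : ℝ}
    (hM : ∀ i, (E i * E i * ρ).trace.re ≤ M) :
    ((∑ i, (a i : ℂ) • E i) * (∑ i, (a i : ℂ) • E i) * ρ).trace.re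
      ≤ (∑ i, a i ^ 2) * (M + 1 / 2 * √(∑ p ∈ univ.offDiag,
          ((E p.1 * E p.2 + E p.2 * E p.1) * ρ).trace.re ^ 2)) := by
  have hdiag : ∑ i, a i ^ 2 * (E i * E i * ρ).trace.re ≤ (∑ i, a i ^ 2) * M := by
    rw [sum_mul]
    exact sum_le_sum fun i _ => mul_le_mul_of_nonneg_left (hM i) (sq_nonneg _)
  have hoffDiag := sum_offDiag_mul_mul_le univ a
    fun p => ((E p.1 * E p.2 + E p.2 * E p.1) * ρ).trace.re
  rw [re_trace_sum_smul_mul_sum_smul_mul, sum_sum_mul_mul_eq_diag_add_offDiag]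
  simp only [add_mul, trace_add, Complex.add_re] at hoffDiag ⊢
  linarith

end Matrix

/-- **Lemma 1 (general anticommutativity bound, Asadian–Erker–Huber–Klöckl).**
Let `E₁,…,E_N` be Hermitian `d × d` matrices and `ρ` a density matrix with
`(1/2)·√(∑_{i≠j} (Tr({Eᵢ,Eⱼ} ρ))²) ≤ K`. Then `∑ᵢ (Tr(Eᵢ ρ))² ≤ maxᵢ Tr(Eᵢ² ρ) + K`. -/
theorem stmt2 {d N : ℕ} [NeZero N] (K : ℝ)
    (E : Fin N → Matrix (Fin d) (Fin d) ℂ) (hE : ∀ i, (E i).IsHermitian)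
    (ρ : Matrix (Fin d) (Fin d) ℂ) (hρ : ρ.PosSemidef) (hρ1 : ρ.trace = 1)
    (hK : (1 / 2) * Real.sqrt (∑ p ∈ Finset.univ.offDiag,
        (((E p.1 * E p.2 + E p.2 * E p.1) * ρ).trace).re ^ 2) ≤ K) :
    ∑ i, (((E i * ρ).trace).re) ^ 2 ≤
      (Finset.univ.sup' Finset.univ_nonempty fun i => ((E i * E i * ρ).trace).re) + K := by
  set a : Fin N → ℝ := fun i => ((E i * ρ).trace).re
  set S := ∑ i, a i ^ 2
  set M := Finset.univ.sup' Finset.univ_nonempty fun i => ((E i * E i * ρ).trace).re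
  have hM : ∀ i, ((E i * E i * ρ).trace).re ≤ M := fun i =>
    le_sup' (fun i => ((E i * E i * ρ).trace).re) (mem_univ i)
  set A := ∑ i, (a i : ℂ) • E i
  have hA : A.IsHermitian := (isSelfAdjoint_sum _ fun i _ =>
    ((hE i).smul (Complex.conj_ofReal (a i))).isSelfAdjoint).isHermitian
  have hTrA : (A * ρ).trace.re = S := by
    simp only [A, sum_mul, trace_sum, Complex.re_sum, Matrix.smul_mul, trace_smul, smul_eq_mul,
      Complex.re_ofReal_mul]
    exact sum_congr rfl fun i _ => (sq (a i)).symm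
  have hS : 0 ≤ S := sum_nonneg fun i _ => sq_nonneg (a i)
  have hMK : 0 ≤ M + K := add_nonneg (((hE 0).re_trace_mul_self_mul_nonneg hρ).trans (hM 0))
    ((mul_nonneg (by norm_num) (Real.sqrt_nonneg _)).trans hK)
  have hquad : S * S ≤ S * (M + K) :=
    calc S * S = (A * ρ).trace.re ^ 2 := by rw [hTrA, sq]
      _ ≤ (A * A * ρ).trace.re := hA.sq_re_trace_mul_le_s2 hρ hρ1
      _ ≤ S * (M + K) := (re_trace_sum_smul_mul_sum_smul_mul_le a E ρ hM).trans
          (mul_le_mul_of_nonneg_left (add_le_add_right hK M) hS)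
  rcases hS.eq_or_lt with hS0 | hSpos
  · exact hS0 ▸ hMK
  · exact le_of_mul_le_mul_left hquad hSpos
end

section
/- Let r ≥ 6 be an integer, n = 2(r−1), |E| = r(r−1)/2 + 1. Then the inequality ⌈r/2⌉/|E| < (r+1)⌊r/2⌋ − r) / (n⌊r/2⌋ + |E|(⌊r/2⌋−1)) holds, i.e., 2⌈r/2⌉/(r(r−1)+2) < 2((r+1)⌊r/2⌋ − r)/((r²+3r−2)⌊r/2⌋ − r² + r − 2), so the interval of white-noise ratios p for which γ*_r = (⌊r/2⌋−1)/⌊r/2⌋ is the unique optimizer and f(γ*_r) > 0 is nonempty. -/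
/-- **Nonemptiness of the noise interval for Cthulhu graphs (Eq. (6)/(A.8)).** For `r ≥ 6`,
with `n = 2(r−1)` and `|E| = r(r−1)/2 + 1`, the inequality
`⌈r/2⌉/|E| < ((r+1)⌊r/2⌋ − r)/(n⌊r/2⌋ + |E|(⌊r/2⌋ − 1))` holds, equivalently
`2⌈r/2⌉/(r(r−1)+2) < 2((r+1)⌊r/2⌋ − r)/((r²+3r−2)⌊r/2⌋ − r² + r − 2)`, so the interval of
white-noise ratios `p` for which `γ*_r` is the unique optimizer with `f(γ*_r) > 0` is
nonempty. -/
theorem stmt15 (r : ℕ) (hr : 6 ≤ r) :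
    ((((r + 1) / 2 : ℕ) : ℝ) / ((r : ℝ) * ((r : ℝ) - 1) / 2 + 1) <
      (((r : ℝ) + 1) * ((r / 2 : ℕ) : ℝ) - (r : ℝ)) /
        ((2 * ((r : ℝ) - 1)) * ((r / 2 : ℕ) : ℝ) +
          ((r : ℝ) * ((r : ℝ) - 1) / 2 + 1) * (((r / 2 : ℕ) : ℝ) - 1))) ∧
    (2 * (((r + 1) / 2 : ℕ) : ℝ) / ((r : ℝ) * ((r : ℝ) - 1) + 2) <
      2 * (((r : ℝ) + 1) * ((r / 2 : ℕ) : ℝ) - (r : ℝ)) /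
        (((r : ℝ) ^ 2 + 3 * (r : ℝ) - 2) * ((r / 2 : ℕ) : ℝ) - (r : ℝ) ^ 2 + (r : ℝ) - 2)) := by
  obtain ⟨k, hk⟩ := Nat.even_or_odd' r
  have hk3 : 3 ≤ k := by omega
  have hk3' : (3 : ℝ) ≤ (k : ℝ) := by exact_mod_cast hk3
  rcases hk with rfl | rfl
  · have h1 : ((2 * k + 1) / 2 : ℕ) = k := by omega
    have h2 : ((2 * k) / 2 : ℕ) = k := by omega
    rw [h1, h2]
    push_cast
    have h0 : (0:ℝ) ≤ (k:ℝ) - 1 := by linarith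
    have hp : (0:ℝ) ≤ ((k:ℝ)-1) * (k:ℝ) * (k:ℝ) :=
      mul_nonneg (mul_nonneg h0 (by positivity)) (by positivity)
    constructor
    · rw [div_lt_div_iff₀ (by nlinarith [hp]) (by nlinarith [hp])]
      nlinarith [sq_nonneg (k:ℝ), sq_nonneg ((k:ℝ)-3)]
    · rw [div_lt_div_iff₀ (by nlinarith [hp]) (by nlinarith [hp])]
      nlinarith [sq_nonneg (k:ℝ), sq_nonneg ((k:ℝ)-3)]
  · have h1 : ((2 * k + 1 + 1) / 2 : ℕ) = k + 1 := by omega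
    have h2 : ((2 * k + 1) / 2 : ℕ) = k := by omega
    rw [h1, h2]
    push_cast
    have h0 : (0:ℝ) ≤ (k:ℝ) - 1 := by linarith
    have hp : (0:ℝ) ≤ ((k:ℝ)-1) * (k:ℝ) * (k:ℝ) :=
      mul_nonneg (mul_nonneg h0 (by positivity)) (by positivity)
    constructor
    · rw [div_lt_div_iff₀ (by nlinarith [hp]) (by nlinarith [hp])]
      nlinarith [sq_nonneg (k:ℝ), sq_nonneg ((k:ℝ)-3)]
    · rw [div_lt_div_iff₀ (by nlinarith [hp]) (by nlinarith [hp])]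
      nlinarith [sq_nonneg (k:ℝ), sq_nonneg ((k:ℝ)-3)]
end

section
/- Let |GHZ_n⟩ = (|0⟩^{⊗n} + |1⟩^{⊗n})/√2. For any biseparable (2-separable) n-qubit state ρ, the fidelity satisfies ⟨GHZ_n|ρ|GHZ_n⟩ ≤ 1/2. Consequently, W = (1/2)I − |GHZ_n⟩⟨GHZ_n| satisfies Tr(Wρ) ≥ 0 for all biseparable ρ. -/
/-! Across a bipartition `A | B`, only the entries of `ρ_A` and `ρ_B` on the two constant basis
vectors `|0…0⟩`, `|1…1⟩` of each side enter `⟨GHZ|ρ_A ⊗ ρ_B|GHZ⟩`, which equals `½ ∑ a_st b_st`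
for the `2 × 2` compressions `a`, `b` of `ρ_A`, `ρ_B`. Positivity gives `|a₀₁|² ≤ a₀₀ a₁₁` and
`|b₀₁|² ≤ b₀₀ b₁₁`, so by AM–GM `2 Re (a₀₁ b₀₁) ≤ a₀₀ b₁₁ + a₁₁ b₀₀`, whence
`∑ a_st b_st ≤ (a₀₀ + a₁₁)(b₀₀ + b₁₁) ≤ tr ρ_A · tr ρ_B = 1`. Both claims are linear in `ρ`, so
the bound for product states extends to their convex mixtures. -/

open ComplexOrder

/-- Amplitudes of the `n`-qubit GHZ state `(|0…0⟩ + |1…1⟩)/√2`. -/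
noncomputable def ghzVec (n : ℕ) (x : Fin n → Fin 2) : ℂ :=
  if (∀ i, x i = 0) ∨ (∀ i, x i = 1) then (((Real.sqrt 2)⁻¹ : ℝ) : ℂ) else 0

/-- The projector `|GHZ_n⟩⟨GHZ_n|`. -/
noncomputable def ghzProj (n : ℕ) : Matrix (Fin n → Fin 2) (Fin n → Fin 2) ℂ :=
  Matrix.of fun f g => ghzVec n f * star (ghzVec n g)

/-- Tensor product of states of the groups of qubits given by the partition `P`. -/
noncomputable def prodState {n k : ℕ} (P : Fin n → Fin k)
    (ρs : ∀ j : Fin k,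
      Matrix ({v : Fin n // P v = j} → Fin 2) ({v : Fin n // P v = j} → Fin 2) ℂ) :
    Matrix (Fin n → Fin 2) (Fin n → Fin 2) ℂ :=
  Matrix.of fun f g => ∏ j, ρs j (fun v => f v.1) (fun v => g v.1)

lemma two_mul_re_mul_le {z w : ℂ} {x y u v : ℝ} (hx : 0 ≤ x) (hy : 0 ≤ y) (hu : 0 ≤ u)
    (hv : 0 ≤ v) (hz : Complex.normSq z ≤ x * y) (hw : Complex.normSq w ≤ u * v) :
    2 * (z * w).re ≤ x * v + y * u := by
  have hzw : (z * w).re ^ 2 ≤ x * y * (u * v) := by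
    calc (z * w).re ^ 2 ≤ Complex.normSq (z * w) := by
          rw [sq]; exact Complex.re_sq_le_normSq _
      _ = Complex.normSq z * Complex.normSq w := Complex.normSq_mul z w
      _ ≤ x * y * (u * v) := mul_le_mul hz hw (Complex.normSq_nonneg w) (by positivity)
  refine (abs_le_of_sq_le_sq' ?_ (by positivity)).2
  nlinarith [sq_nonneg (x * v - y * u)]

namespace Matrix.PosSemidef

variable {X : Type*} {M : Matrix X X ℂ}

lemma ofReal_re_apply_self (hM : M.PosSemidef) (i : X) : ((M i i).re : ℂ) = M i i :=
  hM.isHermitian.coe_re_apply_self i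

lemma re_apply_self_nonneg (hM : M.PosSemidef) (i : X) : 0 ≤ (M i i).re :=
  (Complex.nonneg_iff.mp hM.diag_nonneg).1

lemma re_trace_nonneg [Fintype X] (hM : M.PosSemidef) : 0 ≤ M.trace.re :=
  (Complex.nonneg_iff.mp hM.trace_nonneg).1

lemma normSq_apply_le (hM : M.PosSemidef) (i j : X) :
    Complex.normSq (M i j) ≤ (M i i).re * (M j j).re := by
  classical
  have hdet := (hM.submatrix ![i, j]).det_nonneg
  rw [det_fin_two] at hdet
  simp only [submatrix_apply, cons_val_zero, cons_val_one] at hdet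
  rw [← hM.isHermitian.apply j i, ← hM.ofReal_re_apply_self i, ← hM.ofReal_re_apply_self j,
    Complex.star_def, Complex.mul_conj] at hdet
  exact sub_nonneg.mp (Complex.zero_le_real.mp (by exact_mod_cast hdet))

lemma re_trace_submatrix_le [Fintype X] (hM : M.PosSemidef) {k : Type*} [Fintype k] {e : k → X}
    (he : e.Injective) : (M.submatrix e e).trace.re ≤ M.trace.re := by
  simp only [trace, diag_apply, submatrix_apply, Complex.re_sum]
  calc ∑ i, (M (e i) (e i)).re = ∑ x ∈ Finset.univ.map ⟨e, he⟩, (M x x).re := by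
        rw [Finset.sum_map]; rfl
    _ ≤ ∑ x, (M x x).re := Finset.sum_le_univ_sum_of_nonneg fun x => hM.re_apply_self_nonneg x

lemma re_sum_mul_le_fin_two {A B : Matrix (Fin 2) (Fin 2) ℂ}
    (hA : A.PosSemidef) (hB : B.PosSemidef) :
    (∑ s, ∑ t, A s t * B s t).re ≤ A.trace.re * B.trace.re := by
  have hoff := two_mul_re_mul_le (hA.re_apply_self_nonneg 0) (hA.re_apply_self_nonneg 1)
    (hB.re_apply_self_nonneg 0) (hB.re_apply_self_nonneg 1)
    (hA.normSq_apply_le 0 1) (hB.normSq_apply_le 0 1)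
  simp only [Fin.sum_univ_two, trace, diag_apply]
  rw [← hA.isHermitian.apply 1 0, ← hB.isHermitian.apply 1 0,
    ← hA.ofReal_re_apply_self 0, ← hA.ofReal_re_apply_self 1,
    ← hB.ofReal_re_apply_self 0, ← hB.ofReal_re_apply_self 1]
  simp only [Complex.add_re, Complex.mul_re, Complex.ofReal_re, Complex.ofReal_im,
    Complex.star_def, Complex.conj_re, Complex.conj_im] at hoff ⊢
  linarith

end Matrix.PosSemidef

lemma Matrix.re_trace_mul_sum_smul {X ι : Type*} [Fintype X] [Fintype ι] (M : Matrix X X ℂ)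
    (p : ι → ℝ) (σ : ι → Matrix X X ℂ) :
    (M * ∑ m, (p m : ℂ) • σ m).trace.re = ∑ m, p m * (M * σ m).trace.re := by
  simp [Matrix.mul_sum, Matrix.trace_sum, Complex.re_sum]

section GHZ

variable {n : ℕ}

lemma star_ghzVec (x : Fin n → Fin 2) : star (ghzVec n x) = ghzVec n x := by
  unfold ghzVec
  split_ifs <;> simp

lemma sum_ghzVec_mul (hn : 0 < n) (h : (Fin n → Fin 2) → ℂ) :
    ∑ x, ghzVec n x * h x = (((√2)⁻¹ : ℝ) : ℂ) * ∑ s : Fin 2, h fun _ => s := by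
  have hne : (fun _ : Fin n => (0 : Fin 2)) ≠ fun _ => 1 := fun h => by
    simpa using congrFun h ⟨0, hn⟩
  rw [Fintype.sum_eq_add _ _ hne, Fin.sum_univ_two, mul_add]
  · simp [ghzVec]
  · rintro x ⟨h0, h1⟩
    rw [ne_eq, funext_iff] at h0 h1
    simp [ghzVec, h0, h1]

lemma trace_ghzProj_mul (hn : 0 < n) (σ : Matrix (Fin n → Fin 2) (Fin n → Fin 2) ℂ) :
    (ghzProj n * σ).trace = (∑ s, ∑ t, σ (fun _ => s) (fun _ => t)) / 2 := by
  have hc : (((√2)⁻¹ : ℝ) : ℂ) * (((√2)⁻¹ : ℝ) : ℂ) = 1 / 2 := by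
    rw [← Complex.ofReal_mul, ← mul_inv, Real.mul_self_sqrt zero_le_two]
    norm_num
  calc (ghzProj n * σ).trace = ∑ x, ghzVec n x * ∑ y, ghzVec n y * σ y x := by
        simp only [Matrix.trace, Matrix.diag_apply, Matrix.mul_apply, ghzProj, Matrix.of_apply,
          star_ghzVec, Finset.mul_sum, mul_assoc]
    _ = _ := by
        simp only [sum_ghzVec_mul hn]
        rw [← Finset.mul_sum, ← mul_assoc, hc, Finset.sum_comm, one_div_mul_eq_div]

end GHZ

section prodState

variable {n : ℕ}

def piFiberEquiv {k : ℕ} (P : Fin n → Fin k) :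
    (Fin n → Fin 2) ≃ ∀ j, ({v : Fin n // P v = j} → Fin 2) :=
  ((Equiv.sigmaFiberEquiv P).arrowCongr (Equiv.refl (Fin 2))).symm.trans
    (Equiv.piCurry fun _ _ => Fin 2)

lemma trace_prodState {k : ℕ} (P : Fin n → Fin k)
    (ρs : ∀ j : Fin k,
      Matrix ({v : Fin n // P v = j} → Fin 2) ({v : Fin n // P v = j} → Fin 2) ℂ) :
    (prodState P ρs).trace = ∏ j, (ρs j).trace := by
  simp only [Matrix.trace, Matrix.diag_apply, Fintype.prod_sum]
  exact (piFiberEquiv P).sum_comp fun g => ∏ j, ρs j (g j) (g j)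

lemma re_trace_ghzProj_mul_prodState_le (P : Fin n → Fin 2) (hP : Function.Surjective P)
    (ρs : ∀ j : Fin 2,
      Matrix ({v : Fin n // P v = j} → Fin 2) ({v : Fin n // P v = j} → Fin 2) ℂ)
    (h0 : (ρs 0).PosSemidef) (h1 : (ρs 1).PosSemidef) :
    (ghzProj n * prodState P ρs).trace.re ≤ (ρs 0).trace.re * (ρs 1).trace.re / 2 := by
  let e (j : Fin 2) : Fin 2 → ({v : Fin n // P v = j} → Fin 2) := fun s _ => s
  have he (j : Fin 2) : (e j).Injective := fun s t hst => by
    obtain ⟨v, hv⟩ := hP j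
    exact congrFun hst ⟨v, hv⟩
  rw [trace_ghzProj_mul (hP 0).choose.pos, Complex.div_ofNat_re]
  gcongr ?_ / 2
  calc (∑ s, ∑ t, prodState P ρs (fun _ => s) (fun _ => t)).re
      = (∑ s, ∑ t, (ρs 0).submatrix (e 0) (e 0) s t * (ρs 1).submatrix (e 1) (e 1) s t).re := by
        simp only [prodState, Matrix.of_apply, Fin.prod_univ_two]; rfl
    _ ≤ ((ρs 0).submatrix (e 0) (e 0)).trace.re * ((ρs 1).submatrix (e 1) (e 1)).trace.re :=
        (h0.submatrix _).re_sum_mul_le_fin_two (h1.submatrix _)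
    _ ≤ (ρs 0).trace.re * (ρs 1).trace.re :=
        mul_le_mul (h0.re_trace_submatrix_le (he 0)) (h1.re_trace_submatrix_le (he 1))
          (h1.submatrix _).re_trace_nonneg h0.re_trace_nonneg

end prodState

/-- **GHZ fidelity witness.** For any biseparable `n`-qubit state `ρ` (a convex mixture of
product states across bipartitions of the qubits into two nonempty groups), the fidelity
satisfies `⟨GHZ_n|ρ|GHZ_n⟩ ≤ 1/2`; consequently `W = (1/2)·1 − |GHZ_n⟩⟨GHZ_n|` satisfies
`Tr(Wρ) ≥ 0`. -/
theorem stmt17 {n : ℕ}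
    {ι : Type*} [Fintype ι] (p : ι → ℝ) (hp : ∀ m, 0 ≤ p m) (hp1 : ∑ m, p m = 1)
    (P : ι → Fin n → Fin 2) (hP : ∀ m, Function.Surjective (P m))
    (ρs : ∀ m, ∀ j : Fin 2,
      Matrix ({v : Fin n // P m v = j} → Fin 2) ({v : Fin n // P m v = j} → Fin 2) ℂ)
    (hρs : ∀ m j, (ρs m j).PosSemidef ∧ (ρs m j).trace = 1)
    (ρ : Matrix (Fin n → Fin 2) (Fin n → Fin 2) ℂ)
    (hρ : ρ = ∑ m, ((p m : ℝ) : ℂ) • prodState (P m) (ρs m)) :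
    ((ghzProj n * ρ).trace).re ≤ 1 / 2 ∧
      0 ≤ (((((1 : ℝ) / 2 : ℝ) : ℂ) • (1 : Matrix (Fin n → Fin 2) (Fin n → Fin 2) ℂ)
          - ghzProj n) * ρ).trace.re := by
  have htrace (m : ι) : (prodState (P m) (ρs m)).trace = 1 := by
    simp [trace_prodState, Fin.prod_univ_two, (hρs m 0).2, (hρs m 1).2]
  have hfid (m : ι) : (ghzProj n * prodState (P m) (ρs m)).trace.re ≤ 1 / 2 := by
    simpa [(hρs m 0).2, (hρs m 1).2] using
      re_trace_ghzProj_mul_prodState_le (P m) (hP m) (ρs m) (hρs m 0).1 (hρs m 1).1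
  subst hρ
  refine ⟨?_, ?_⟩
  · rw [Matrix.re_trace_mul_sum_smul]
    calc ∑ m, p m * (ghzProj n * prodState (P m) (ρs m)).trace.re ≤ ∑ m, p m * (1 / 2) :=
          Finset.sum_le_sum fun m _ => mul_le_mul_of_nonneg_left (hfid m) (hp m)
      _ = 1 / 2 := by rw [← Finset.sum_mul, hp1, one_mul]
  · rw [Matrix.re_trace_mul_sum_smul]
    refine Finset.sum_nonneg fun m _ => mul_nonneg (hp m) ?_
    rw [Matrix.sub_mul, Matrix.trace_sub, Matrix.smul_mul, Matrix.one_mul, Matrix.trace_smul,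
      htrace m, Complex.sub_re]
    simpa using hfid m
end
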